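/- arXiv:1011.6612 — 3 statements merged into one kernel-verified Lean document; each statement's English description precedes it below -/
import Mathlib

section
/- For all natural numbers n, k with k ≤ n and all natural numbers i with i ≤ 2n+2: C(2n-k+2, 2n-i+2) - C(k, 2n-i+2) = sum over j from k to n of ((i+1)/(j+1)) * C(j+1, i-j) * C(2n-(k+j)+1, 2n-2j+1). -/
/-- Binomial coefficient `C(n,k)` extended by `0` when `k < 0` or `k > n`. -/
def Cz (n k : ℤ) : ℤ := if 0 ≤ k ∧ k ≤ n then (n.toNat.choose k.toNat : ℤ) else 0

/-!
With `t = x(1+x)`, the weight `(i+1)/(j+1) · C(j+1, i-j)` is the coefficient of `x^i` in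
`(1+2x) t^j = x^j (1+x)^(j+1) + x^(j+1) (1+x)^j`, and with `d = n - k`, `j = k + s` the last factor
is `C(2d+1-s, s)`. So the right side is the coefficient of `x^i` in
`(x(1+x))^k (1+2x) Σ_s C(2d+1-s, s) t^s`. Since `1+x` and `-x` are the roots of `y² = y + t`,
the Binet formula for Fibonacci polynomials turns `(1+2x) Σ_s C(M-s, s) t^s` into
`(1+x)^(M+1) - (-x)^(M+1)`, and for `M = 2d+1` this leaves `x^k (1+x)^(2n+2-k) - x^(2n+2-k) (1+x)^k`,
whose coefficient of `x^i` is the left side.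
-/

open Polynomial Finset

lemma Cz_natCast (m : ℕ) (b : ℤ) : Cz m b = if 0 ≤ b then (m.choose b.toNat : ℤ) else 0 := by
  unfold Cz
  by_cases hb : 0 ≤ b
  · by_cases hbm : b ≤ m
    · simp [hb, hbm]
    · rw [if_neg (by tauto), if_pos hb, Nat.choose_eq_zero_of_lt (by omega), Nat.cast_zero]
  · simp [hb]

lemma Cz_natCast_natCast (m b : ℕ) : Cz m b = m.choose b := by
  simp [Cz_natCast]

lemma Cz_symm {a : ℤ} (ha : 0 ≤ a) (b : ℤ) : Cz a (a - b) = Cz a b := by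
  unfold Cz
  by_cases h : 0 ≤ b ∧ b ≤ a
  · rw [if_pos (by omega), if_pos h, ← Nat.choose_symm (by omega)]
    congr 2; omega
  · rw [if_neg (by omega), if_neg h]

lemma mul_Cz_add_one (m : ℕ) (b : ℤ) : b * Cz (m + 1) b = (m + 1) * Cz m (b - 1) := by
  rcases lt_trichotomy b 0 with hb | rfl | hb
  · rw [Cz, Cz, if_neg (by omega), if_neg (by omega)]; ring
  · simp [Cz]
  · obtain ⟨c, rfl⟩ : ∃ c : ℕ, b = c + 1 := ⟨b.toNat - 1, by omega⟩
    rw [add_sub_cancel_right, ← Nat.cast_add_one, ← Nat.cast_add_one, Cz_natCast_natCast,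
      Cz_natCast_natCast]
    exact_mod_cast (mul_comm _ _).trans (Nat.add_one_mul_choose_eq m c).symm

lemma add_one_div_mul_Cz {K : Type*} [Field K] [CharZero K] (i j : ℕ) :
    ((i : K) + 1) / ((j : K) + 1) * (Cz ((j : ℤ) + 1) ((i : ℤ) - j) : K) =
      Cz ((j : ℤ) + 1) ((i : ℤ) - j) + Cz j ((i : ℤ) - j - 1) := by
  have h : (((i : ℤ) - j : ℤ) : K) * Cz ((j : ℤ) + 1) ((i : ℤ) - j) =
      (j + 1) * Cz j ((i : ℤ) - j - 1) := by
    exact_mod_cast mul_Cz_add_one j ((i : ℤ) - j)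
  rw [div_mul_eq_mul_div, div_eq_iff (Nat.cast_add_one_ne_zero j)]
  push_cast at h
  linear_combination h

lemma coeff_X_pow_mul_one_add_X_pow {R : Type*} [Ring R] (a m i : ℕ) :
    (X ^ a * (1 + X) ^ m : R[X]).coeff i = Cz m ((i : ℤ) - a) := by
  rw [coeff_X_pow_mul', Cz_natCast]
  split_ifs with h1 h2 h2
  · rw [coeff_one_add_X_pow]; norm_cast
  · omega
  · omega
  · simp

/-- The Fibonacci polynomial, normalized so that `fibSum 1 M = Nat.fib (M + 1)`. -/
def fibSum {R : Type*} [Semiring R] (t : R) (M : ℕ) : R :=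
  ∑ p ∈ antidiagonal M, (p.1.choose p.2 : R) * t ^ p.2

lemma fibSum_add_two {R : Type*} [CommSemiring R] (t : R) (M : ℕ) :
    fibSum t (M + 2) = fibSum t (M + 1) + t * fibSum t M := by
  simp only [fibSum, Nat.antidiagonal_succ_succ', Nat.antidiagonal_succ']
  simp [Nat.choose_succ_succ, sum_add_distrib, add_mul, pow_succ', mul_sum, mul_left_comm t]
  ring

lemma one_add_two_mul_fibSum {R : Type*} [CommRing R] (x : R) (M : ℕ) :
    (1 + 2 * x) * fibSum (x * (1 + x)) M = (1 + x) ^ (M + 1) - (-x) ^ (M + 1) := by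
  induction M using Nat.twoStepInduction with
  | zero => simp [fibSum]; ring
  | one => simp [fibSum, Nat.antidiagonal_succ]; ring
  | more M h0 h1 =>
    rw [fibSum_add_two]
    linear_combination h1 + x * (1 + x) * h0

lemma fibSum_two_mul_add_one {R : Type*} [CommSemiring R] (t : R) (d : ℕ) :
    fibSum t (2 * d + 1) = ∑ s ∈ range (d + 1), ((2 * d + 1 - s).choose s : R) * t ^ s := by
  rw [fibSum, ← Nat.sum_antidiagonal_swap, Nat.sum_antidiagonal_eq_sum_range_succ_mk,
    show (2 * d + 1).succ = (d + 1) + (d + 1) by omega, sum_range_add]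
  have htail : ∑ s ∈ range (d + 1),
      ((2 * d + 1 - (d + 1 + s)).choose (d + 1 + s) : R) * t ^ (d + 1 + s) = 0 :=
    sum_eq_zero fun s _ => by rw [Nat.choose_eq_zero_of_lt (by omega), Nat.cast_zero, zero_mul]
  simp only [Prod.swap_prod_mk, htail, add_zero]

lemma X_pow_mul_one_add_X_pow_sub_eq_sum (R : Type*) [CommRing R] (k d : ℕ) :
    (X ^ k * (1 + X) ^ (k + 2 * d + 2) - X ^ (k + 2 * d + 2) * (1 + X) ^ k : R[X]) =
      ∑ s ∈ range (d + 1), ((2 * d + 1 - s).choose s : R[X]) *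
        (X ^ (k + s) * (1 + X) ^ (k + s + 1) + X ^ (k + s + 1) * (1 + X) ^ (k + s)) := by
  have hfib := one_add_two_mul_fibSum (X : R[X]) (2 * d + 1)
  rw [fibSum_two_mul_add_one, Even.neg_pow ⟨d + 1, by ring⟩] at hfib
  simp only [mul_pow] at hfib
  calc _ = X ^ k * (1 + X) ^ k * ((1 + X) ^ (2 * d + 1 + 1) - X ^ (2 * d + 1 + 1) : R[X]) := by
        ring
    _ = _ := by
      rw [← hfib, mul_sum, mul_sum]
      exact sum_congr rfl fun s _ => by ring

theorem identity_two_general (n k i : ℕ) (hk : k ≤ n) :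
    ((Cz (2 * (n : ℤ) - k + 2) (2 * (n : ℤ) - i + 2) : ℚ)
        - (Cz (k : ℤ) (2 * (n : ℤ) - i + 2) : ℚ))
      = ∑ j ∈ Finset.Icc k n,
          (((i : ℚ) + 1) / ((j : ℚ) + 1))
            * (Cz ((j : ℤ) + 1) ((i : ℤ) - j) : ℚ)
            * (Cz (2 * (n : ℤ) - ((k : ℤ) + j) + 1) (2 * (n : ℤ) - 2 * j + 1) : ℚ) := by
  obtain ⟨d, rfl⟩ := Nat.exists_eq_add_of_le hk
  have hcoeff := congrArg (coeff · i) (X_pow_mul_one_add_X_pow_sub_eq_sum ℚ k d)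
  simp only [coeff_sub, finsetSum_coeff, coeff_natCast_mul, coeff_add,
    coeff_X_pow_mul_one_add_X_pow] at hcoeff
  have hfirst : Cz (2 * ((k + d : ℕ) : ℤ) - k + 2) (2 * ((k + d : ℕ) : ℤ) - i + 2) =
      Cz (k + 2 * d + 2 : ℕ) ((i : ℤ) - k) := by
    rw [← Cz_symm (by omega)]; congr 1 <;> omega
  have hsecond : Cz k (2 * ((k + d : ℕ) : ℤ) - i + 2) = Cz k ((i : ℤ) - (k + 2 * d + 2 : ℕ)) := by
    rw [← Cz_symm (by omega)]; congr 1; omega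
  rw [← Ico_add_one_right_eq_Icc, sum_Ico_eq_sum_range, show k + d + 1 - k = d + 1 by omega,
    hfirst, hsecond, hcoeff]
  refine sum_congr rfl fun s hs => ?_
  have hchoose : Cz (2 * ((k + d : ℕ) : ℤ) - (k + (k + s : ℕ)) + 1)
      (2 * ((k + d : ℕ) : ℤ) - 2 * (k + s : ℕ) + 1) = (2 * d + 1 - s).choose s := by
    rw [mem_range] at hs
    rw [← Cz_natCast_natCast, ← Cz_symm (by omega)]
    congr 1 <;> omega
  rw [add_one_div_mul_Cz, hchoose]
  push_cast
  rw [sub_sub, mul_comm]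

theorem identity_two (n k i : ℕ) (hk : k ≤ n) (hi : i ≤ 2 * n + 2) :
    ((Cz (2 * (n : ℤ) - k + 2) (2 * (n : ℤ) - i + 2) : ℚ)
        - (Cz (k : ℤ) (2 * (n : ℤ) - i + 2) : ℚ))
      = ∑ j ∈ Finset.Icc k n,
          (((i : ℚ) + 1) / ((j : ℚ) + 1))
            * (Cz ((j : ℤ) + 1) ((i : ℤ) - j) : ℚ)
            * (Cz (2 * (n : ℤ) - ((k : ℤ) + j) + 1) (2 * (n : ℤ) - 2 * j + 1) : ℚ) :=
  identity_two_general n k i hk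
end

section
/- Define F_a(z) = sum over j from 0 to a of z^j * ((2a+1)/(2a-2j+1)) * C(2a-j, 2a-2j). Then for all s, F_a(s(s+1)) = (s+1)^(2a+1) - s^(2a+1). -/
/-!
Put `α = s + 1` and `β = -s`, the roots of `X² - X - z` for `z = s(s+1)`. The coefficients of
`F_a` are those of the Lucas polynomial `2 P_{2a+1} - P_{2a}`, where `P_n(z) = ∑ C(n-j, j) z^j`
satisfies `P_{n+2} = P_{n+1} + z P_n`. From this recurrence `P_{n+1} = α P_n + β^{n+1}` and,
by symmetry, `P_{n+1} = β P_n + α^{n+1}`; adding the two gives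
`2 P_{n+1} - P_n = α^{n+1} + β^{n+1}`, which for `n + 1 = 2a + 1` odd is
`(s+1)^{2a+1} - s^{2a+1}`.
-/

open Finset

section FibPoly

variable {R : Type*}

/-- `fibPoly z n` is the Fibonacci polynomial `F_{n+1}` evaluated at `z`; `fibPoly 1 n = fib (n+1)`
is `Nat.fib_succ_eq_sum_choose`. -/
def fibPoly [CommSemiring R] (z : R) (n : ℕ) : R :=
  ∑ p ∈ antidiagonal n, (p.2.choose p.1 : R) * z ^ p.1

theorem fibPoly_eq_sum_range [CommSemiring R] (z : R) (n : ℕ) :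
    fibPoly z n = ∑ j ∈ range (n / 2 + 1), ((n - j).choose j : R) * z ^ j := by
  rw [fibPoly, Nat.sum_antidiagonal_eq_sum_range_succ (fun j i => (i.choose j : R) * z ^ j)]
  refine (sum_subset (range_subset_range.mpr (by omega)) fun j hjn hj => ?_).symm
  rw [Nat.choose_eq_zero_of_lt (by simp at hjn hj; omega), Nat.cast_zero, zero_mul]

theorem fibPoly_add_two [CommSemiring R] (z : R) (n : ℕ) :
    fibPoly z (n + 2) = fibPoly z (n + 1) + z * fibPoly z n := by
  rw [fibPoly, fibPoly, fibPoly, Nat.antidiagonal_succ_succ', Nat.antidiagonal_succ,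
    sum_cons, sum_cons, sum_cons, sum_map, sum_map]
  simp only [Function.Embedding.coe_prodMap, Function.Embedding.coeFn_mk,
    Function.Embedding.refl_apply, Prod.map_fst, Prod.map_snd, Nat.succ_eq_add_one,
    Nat.choose_succ_succ, Nat.choose_zero_succ, Nat.choose_zero_right, Nat.cast_add, add_mul,
    sum_add_distrib, mul_sum, mul_left_comm z, ← pow_succ']
  ring

variable [CommRing R] {z α β : R}

theorem fibPoly_succ (hsum : α + β = 1) (hprod : α * β = -z) (n : ℕ) :
    fibPoly z (n + 1) = α * fibPoly z n + β ^ (n + 1) := by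
  induction n with
  | zero => simpa [fibPoly_eq_sum_range] using hsum.symm
  | succ n ih =>
    rw [fibPoly_add_two]
    linear_combination β * ih - fibPoly z (n + 1) * hsum + fibPoly z n * hprod

theorem two_mul_fibPoly_succ_sub_fibPoly (hsum : α + β = 1) (hprod : α * β = -z) (n : ℕ) :
    2 * fibPoly z (n + 1) - fibPoly z n = α ^ (n + 1) + β ^ (n + 1) := by
  have hprod' : β * α = -z := by rw [mul_comm, hprod]
  linear_combination fibPoly_succ hsum hprod n +
    fibPoly_succ ((add_comm β α).trans hsum) hprod' n + fibPoly z n * hsum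

end FibPoly

theorem div_mul_choose_eq_two_mul_choose_sub_choose {K : Type*} [Field K] [CharZero K]
    {a j : ℕ} (hj : j ≤ a) :
    (2 * a + 1 : K) / (2 * a - 2 * j + 1) * ((2 * a - j).choose (2 * a - 2 * j) : K)
      = 2 * ((2 * a + 1 - j).choose j : K) - ((2 * a - j).choose j : K) := by
  obtain ⟨d, rfl⟩ := Nat.exists_eq_add_of_le hj
  rw [show 2 * (j + d) - j = j + 2 * d by omega, show 2 * (j + d) - 2 * j = 2 * d by omega,
    show 2 * (j + d) + 1 - j = j + 2 * d + 1 by omega, ← Nat.choose_symm_add]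
  have hsucc := Nat.choose_mul_succ_eq (j + 2 * d) j
  rw [show j + 2 * d + 1 - j = 2 * d + 1 by omega] at hsucc
  have hcast : ((j + 2 * d).choose j : K) * (j + 2 * d + 1)
      = ((j + 2 * d + 1).choose j : K) * (2 * d + 1) := by
    exact_mod_cast hsucc
  have hden : 2 * ((j + d : ℕ) : K) - 2 * j + 1 = 2 * d + 1 := by push_cast; ring
  rw [hden, div_mul_eq_mul_div, div_eq_iff (by exact_mod_cast (2 * d).succ_ne_zero)]
  push_cast
  linear_combination 2 * hcast

theorem F_closed_form (a : ℕ) (s : ℝ) :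
    (∑ j ∈ Finset.range (a + 1),
        (s * (s + 1)) ^ j * ((2 * a + 1 : ℝ) / (2 * a - 2 * j + 1))
          * ((2 * a - j).choose (2 * a - 2 * j) : ℝ))
      = (s + 1) ^ (2 * a + 1) - s ^ (2 * a + 1) := by
  set z := s * (s + 1)
  calc _ = ∑ j ∈ range (a + 1),
        (2 * ((2 * a + 1 - j).choose j : ℝ) * z ^ j - ((2 * a - j).choose j : ℝ) * z ^ j) :=
        sum_congr rfl fun j hj => by
          rw [mul_assoc,
            div_mul_choose_eq_two_mul_choose_sub_choose (by rw [mem_range] at hj; omega)]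
          ring
    _ = 2 * fibPoly z (2 * a + 1) - fibPoly z (2 * a) := by
        rw [fibPoly_eq_sum_range, fibPoly_eq_sum_range, show (2 * a + 1) / 2 = a by omega,
          show 2 * a / 2 = a by omega, mul_sum, sum_sub_distrib]
        simp only [mul_assoc]
    _ = (s + 1) ^ (2 * a + 1) + (-s) ^ (2 * a + 1) :=
        two_mul_fibPoly_succ_sub_fibPoly (by ring) (by ring) (2 * a)
    _ = _ := by rw [(odd_two_mul_add_one a).neg_pow]; ring
end

section
/- Every 2-by-2 minor of the matrix M^(g)_d(i,k) = C(d-k+1, d-i+1) - C(k, d-i+1) is nonnegative: for 0 ≤ i < i' ≤ d and 0 ≤ k < k' ≤ floor(d/2), M(i,k)*M(i',k') - M(i,k')*M(i',k) ≥ 0. -/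
/-!
Put `c = d - i`. By the hockey-stick identity `M(i,k) = W(k,c) := ∑_{k ≤ m ≤ d-k} C(m,c)`, so the
claim is `W(k',c) W(k,c') ≤ W(k,c) W(k',c')` for `k ≤ k' ≤ d/2` and `c' ≤ c`. If `W(k',c) ≠ 0`,
then `W` is positive on the whole box `[k,k'] × [c',c]`, and there the inequality follows from its
instances on adjacent rows and columns by multiplying them together and cancelling.

For the adjacent instances, peel off the outer terms of the window:
`W(k,·) = F(k,·) + W(k+1,·)` with the folded row `F(m,c) = C(m,c) + C(d-m,c)`, and
`2 W(k+1,·) = ∑_{k < n < d-k} F(n,·)`. Since `F(n,·) = F(d-n,·)`, everything reduces to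
`F(n,c+1) F(k,c) ≤ F(k,c+1) F(n,c)` for `k ≤ n ≤ d/2`, which is again chained from adjacent rows.
For adjacent rows it is proved by induction on the outer row `d - m` of the fold: each step is a
linear combination of 2×2 minors of Pascal's triangle.
-/

open Finset

section CrossMul

variable {R : Type*} [CommSemiring R] [LinearOrder R] [IsStrictOrderedRing R]

theorem cross_mul_le_of_forall_succ {f g : ℕ → R} {a b : ℕ} (hab : a ≤ b)
    (hf : ∀ n ∈ Icc a b, 0 < f n)
    (hstep : ∀ n ∈ Ico a b, f (n + 1) * g n ≤ f n * g (n + 1)) :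
    f b * g a ≤ f a * g b := by
  induction b, hab using Nat.le_induction with
  | base => exact le_rfl
  | succ b hab ih =>
    have ih := ih (fun n hn => hf n (by simp at hn ⊢; omega))
      (fun n hn => hstep n (by simp at hn ⊢; omega))
    refine le_of_mul_le_mul_right ?_ (hf b (by simp; omega))
    calc f (b + 1) * g a * f b = f (b + 1) * (f b * g a) := by ring
      _ ≤ f (b + 1) * (f a * g b) :=
        mul_le_mul_of_nonneg_left ih (hf (b + 1) (by simp; omega)).le
      _ = f a * (f (b + 1) * g b) := by ring
      _ ≤ f a * (f b * g (b + 1)) :=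
        mul_le_mul_of_nonneg_left (hstep b (by simp; omega)) (hf a (by simp; omega)).le
      _ = f a * g (b + 1) * f b := by ring

theorem cross_mul_le_of_forall_succ₂ {K : ℕ → ℕ → R} {a b p q : ℕ} (hab : a ≤ b) (hpq : p ≤ q)
    (hK : ∀ n ∈ Icc a b, ∀ m ∈ Icc p q, 0 < K n m)
    (hstep : ∀ n ∈ Ico a b, ∀ m ∈ Ico p q,
      K (n + 1) (m + 1) * K n m ≤ K n (m + 1) * K (n + 1) m) :
    K b q * K a p ≤ K a q * K b p := by
  have hrows : ∀ n ∈ Ico a b, K (n + 1) q * K n p ≤ K n q * K (n + 1) p := by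
    intro n hn
    have := cross_mul_le_of_forall_succ (f := K (n + 1)) (g := K n) hpq
      (hK (n + 1) (by have := mem_Ico.1 hn; simp; omega))
      (fun m hm => by rw [mul_comm (K (n + 1) m)]; exact hstep n hn m hm)
    rwa [mul_comm (K (n + 1) p)] at this
  exact cross_mul_le_of_forall_succ (f := (K · q)) (g := (K · p)) hab
    (fun n hn => hK n hn q (by simp; omega)) hrows

end CrossMul

/-- `n.choose j`, extended by zero to negative `j` so that Pascal's rule holds in every column. -/
def zchoose (n : ℕ) : ℤ → ℕ
  | (j : ℕ) => n.choose j
  | .negSucc _ => 0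

theorem zchoose_succ (n : ℕ) (j : ℤ) : zchoose (n + 1) j = zchoose n j + zchoose n (j - 1) := by
  match j with
  | 0 => show (n + 1).choose 0 = n.choose 0 + zchoose n (Int.negSucc 0); simp [zchoose]
  | (j + 1 : ℕ) =>
    rw [show ((j + 1 : ℕ) : ℤ) - 1 = j by omega]
    exact (Nat.choose_succ_succ' n j).trans (add_comm _ _)
  | .negSucc m => rfl

theorem choose_succ_mul_choose_le {s t x y : ℕ} (hst : s ≤ t) (hyx : y ≤ x) :
    s.choose (x + 1) * t.choose y ≤ s.choose x * t.choose (y + 1) := by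
  rcases le_or_gt s x with hsx | hxs
  · simp [Nat.choose_eq_zero_of_lt (Nat.lt_succ_of_le hsx)]
  refine Nat.le_of_mul_le_mul_right (c := (x + 1) * (y + 1)) ?_ (by positivity)
  have hs := Nat.choose_succ_right_eq s x
  have ht := Nat.choose_succ_right_eq t y
  calc s.choose (x + 1) * t.choose y * ((x + 1) * (y + 1))
      = s.choose (x + 1) * (x + 1) * t.choose y * (y + 1) := by ring
    _ = s.choose x * t.choose y * ((s - x) * (y + 1)) := by rw [hs]; ring
    _ ≤ s.choose x * t.choose y * ((t - y) * (x + 1)) := by gcongr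
    _ = s.choose x * (t.choose y * (t - y)) * (x + 1) := by ring
    _ = s.choose x * t.choose (y + 1) * ((x + 1) * (y + 1)) := by rw [← ht]; ring

theorem zchoose_succ_mul_zchoose_le {s t : ℕ} (hst : s ≤ t) {x y : ℤ} (hyx : y ≤ x) :
    zchoose s (x + 1) * zchoose t y ≤ zchoose s x * zchoose t (y + 1) := by
  match y, x with
  | .negSucc _, _ => simp [zchoose]
  | (y : ℕ), .negSucc _ => omega
  | (y : ℕ), (x : ℕ) => exact_mod_cast choose_succ_mul_choose_le hst (by omega : y ≤ x)

theorem zchoose_fold_succ_mul_le {s t : ℕ} (hst : s ≤ t) (c : ℤ) :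
    (zchoose s c + zchoose (t + 1) c) * (zchoose (s + 1) (c + 1) + zchoose t (c + 1)) ≤
      (zchoose s (c + 1) + zchoose (t + 1) (c + 1)) * (zchoose (s + 1) c + zchoose t c) := by
  induction t, hst using Nat.le_induction with
  | base => exact le_of_eq (by ring)
  | succ t hst ih =>
    simp only [zchoose_succ, add_sub_cancel_right] at ih ⊢
    have h₁ := zchoose_succ_mul_zchoose_le (le_refl t) (by omega : c - 1 - 1 ≤ c - 1)
    have h₂ := zchoose_succ_mul_zchoose_le (le_refl t) (by omega : c - 1 - 1 ≤ c)
    have h₃ := zchoose_succ_mul_zchoose_le hst (by omega : c - 1 - 1 ≤ c - 1)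
    have h₄ := zchoose_succ_mul_zchoose_le hst (by omega : c - 1 - 1 ≤ c)
    have h₅ := zchoose_succ_mul_zchoose_le hst (le_refl (c - 1))
    simp only [sub_add_cancel] at h₁ h₂ h₃ h₄ h₅
    linarith

def foldedChoose (d m c : ℕ) : ℕ := m.choose c + (d - m).choose c

theorem foldedChoose_sub {d m : ℕ} (hm : m ≤ d) (c : ℕ) :
    foldedChoose d (d - m) c = foldedChoose d m c := by
  rw [foldedChoose, foldedChoose, Nat.sub_sub_self hm, add_comm]

theorem foldedChoose_succ_mul_le {d m : ℕ} (hm : 2 * m + 1 ≤ d) (c : ℕ) :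
    foldedChoose d (m + 1) (c + 1) * foldedChoose d m c ≤
      foldedChoose d m (c + 1) * foldedChoose d (m + 1) c := by
  have h := zchoose_fold_succ_mul_le (s := m) (t := d - (m + 1)) (by omega) c
  rw [show d - (m + 1) + 1 = d - m by omega] at h
  rw [mul_comm]
  exact_mod_cast h

theorem foldedChoose_mul_le {d k n : ℕ} (hkn : k ≤ n) (hn : 2 * n ≤ d) (c : ℕ) :
    foldedChoose d n (c + 1) * foldedChoose d k c ≤
      foldedChoose d k (c + 1) * foldedChoose d n c := by
  rcases Nat.eq_zero_or_pos (foldedChoose d n (c + 1)) with h0 | hpos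
  · simp [h0]
  have hc : c + 1 ≤ d - n := by
    by_contra! hc
    simp [foldedChoose, Nat.choose_eq_zero_of_lt hc,
      Nat.choose_eq_zero_of_lt (by omega : n < c + 1)] at hpos
  refine cross_mul_le_of_forall_succ (f := (foldedChoose d · (c + 1)))
    (g := (foldedChoose d · c)) hkn (fun m hm => ?_) (fun m hm => ?_)
  · have hm : m ≤ n := (mem_Icc.1 hm).2
    exact Nat.add_pos_right _ (Nat.choose_pos (by omega))
  · exact foldedChoose_succ_mul_le (by have := (mem_Ico.1 hm).2; omega) c

theorem foldedChoose_mul_le_of_le_sub {d k n : ℕ} (hkn : k ≤ n) (hnk : n ≤ d - k) (c : ℕ) :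
    foldedChoose d n (c + 1) * foldedChoose d k c ≤
      foldedChoose d k (c + 1) * foldedChoose d n c := by
  rcases le_total (2 * n) d with hn | hn
  · exact foldedChoose_mul_le hkn hn c
  · rw [← foldedChoose_sub (m := n) (by omega), ← foldedChoose_sub (m := n) (by omega)]
    exact foldedChoose_mul_le (by omega) (by omega) c

/-- `M^(g)_d(d - c, k) = windowSum d k c`, by `choose_eq_add_windowSum`. -/
def windowSum (d k c : ℕ) : ℕ := ∑ m ∈ Icc k (d - k), m.choose c

theorem two_mul_windowSum (d k c : ℕ) :
    2 * windowSum d k c = ∑ n ∈ Icc k (d - k), foldedChoose d n c := by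
  simp only [two_mul, windowSum, foldedChoose, sum_add_distrib]
  congr 1
  refine sum_nbij' (d - ·) (d - ·) ?_ ?_ ?_ ?_ ?_ <;> intro m hm <;>
    simp only [mem_Icc] at hm ⊢
  any_goals omega
  rw [Nat.sub_sub_self (by omega)]

theorem windowSum_eq_add {d k : ℕ} (hk : 2 * k < d) (c : ℕ) :
    windowSum d k c = foldedChoose d k c + windowSum d (k + 1) c := by
  rw [windowSum, windowSum, foldedChoose, Icc_eq_cons_Ioc (by omega), sum_cons,
    show d - k = d - (k + 1) + 1 by omega, sum_Ioc_succ_top (by omega), ← Icc_add_one_left_eq_Ioc]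
  ring

theorem windowSum_pos {d k c : ℕ} (hk : 2 * k ≤ d) (hc : c ≤ d - k) : 0 < windowSum d k c :=
  sum_pos' (fun _ _ => Nat.zero_le _) ⟨d - k, mem_Icc.2 ⟨by omega, le_rfl⟩, Nat.choose_pos hc⟩

theorem windowSum_eq_zero {d k c : ℕ} (hc : d - k < c) : windowSum d k c = 0 :=
  sum_eq_zero fun _ hm => Nat.choose_eq_zero_of_lt (by have := (mem_Icc.1 hm).2; omega)

theorem windowSum_succ_mul_le {d k : ℕ} (hk : 2 * (k + 1) ≤ d) (c : ℕ) :
    windowSum d (k + 1) (c + 1) * windowSum d k c ≤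
      windowSum d k (c + 1) * windowSum d (k + 1) c := by
  have hfold : foldedChoose d k c * windowSum d (k + 1) (c + 1) ≤
      foldedChoose d k (c + 1) * windowSum d (k + 1) c := by
    refine Nat.le_of_mul_le_mul_left ?_ two_pos
    rw [mul_left_comm, two_mul_windowSum, mul_sum, mul_left_comm, two_mul_windowSum, mul_sum]
    refine sum_le_sum fun n hn => ?_
    have hn := mem_Icc.1 hn
    rw [mul_comm]
    exact foldedChoose_mul_le_of_le_sub (by omega) (by omega) c
  rw [windowSum_eq_add (k := k) (by omega) c, windowSum_eq_add (k := k) (by omega) (c + 1)]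
  nlinarith [hfold]

theorem windowSum_cross_le {d k k' c c' : ℕ} (hkk' : k ≤ k') (hk' : 2 * k' ≤ d)
    (hcc' : c' ≤ c) :
    windowSum d k' c * windowSum d k c' ≤ windowSum d k c * windowSum d k' c' := by
  rcases le_or_gt c (d - k') with hc | hc
  · refine cross_mul_le_of_forall_succ₂ (K := windowSum d) hkk' hcc' (fun n hn m hm => ?_)
      (fun n hn m hm => ?_)
    · have := mem_Icc.1 hn
      have := mem_Icc.1 hm
      exact windowSum_pos (by omega) (by omega)
    · exact windowSum_succ_mul_le (by have := mem_Ico.1 hn; omega) m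
  · simp [windowSum_eq_zero hc]

theorem sum_range_choose_eq_choose_succ (n c : ℕ) :
    ∑ m ∈ range n, m.choose c = n.choose (c + 1) := by
  induction n with
  | zero => simp
  | succ n ih => rw [sum_range_succ, ih, Nat.choose_succ_succ', add_comm]

theorem choose_eq_add_windowSum {d k : ℕ} (hk : k ≤ d + 1 - k) (c : ℕ) :
    (d + 1 - k).choose (c + 1) = k.choose (c + 1) + windowSum d k c := by
  rw [← sum_range_choose_eq_choose_succ, ← sum_range_choose_eq_choose_succ, windowSum,
    ← sum_range_add_sum_Ico _ hk]
  congr 2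
  ext m
  simp only [mem_Icc, mem_Ico]
  omega

theorem Cz_natCast_s13 (n j : ℕ) : Cz n j = n.choose j := by
  unfold Cz
  split_ifs with h
  · simp
  · rw [Nat.choose_eq_zero_of_lt (by omega), Nat.cast_zero]

theorem Cz_sub_Cz_eq_windowSum {d k i : ℕ} (hk : 2 * k ≤ d) (hi : i ≤ d) :
    Cz ((d : ℤ) - k + 1) ((d : ℤ) - i + 1) - Cz k ((d : ℤ) - i + 1) = windowSum d k (d - i) := by
  rw [show (d : ℤ) - k + 1 = ((d + 1 - k : ℕ) : ℤ) by omega,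
    show (d : ℤ) - i + 1 = ((d - i + 1 : ℕ) : ℤ) by omega, Cz_natCast_s13, Cz_natCast_s13,
    choose_eq_add_windowSum (by omega)]
  push_cast
  ring

theorem minor2_nonneg_Mg (d i i' k k' : ℕ)
    (hii' : i < i') (hi' : i' ≤ d) (hkk' : k < k') (hk' : k' ≤ d / 2) :
    0 ≤ (Cz ((d : ℤ) - k + 1) ((d : ℤ) - i + 1) - Cz k ((d : ℤ) - i + 1))
          * (Cz ((d : ℤ) - k' + 1) ((d : ℤ) - i' + 1) - Cz k' ((d : ℤ) - i' + 1))
        - (Cz ((d : ℤ) - k' + 1) ((d : ℤ) - i + 1) - Cz k' ((d : ℤ) - i + 1))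
          * (Cz ((d : ℤ) - k + 1) ((d : ℤ) - i' + 1) - Cz k ((d : ℤ) - i' + 1)) := by
  have h2k' : 2 * k' ≤ d := by omega
  rw [Cz_sub_Cz_eq_windowSum (by omega) (by omega), Cz_sub_Cz_eq_windowSum h2k' hi',
    Cz_sub_Cz_eq_windowSum h2k' (by omega), Cz_sub_Cz_eq_windowSum (by omega) hi', sub_nonneg]
  exact_mod_cast windowSum_cross_le hkk'.le h2k' (Nat.sub_le_sub_left hii'.le d)
end
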